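/- Let x_1, …, x_n ∈ ℝ^{2n} be linearly independent vectors spanning a Lagrangian subspace, i.e. x_iᵀ J x_j = 0 for all i, j, and let Ĥ := X_R X_L⁺ + Jᵀ (X_R X_L⁺)ᵀ J. Then ‖Ĥ‖_F ≤ ‖H‖_F for every skew-Hamiltonian matrix H ∈ ℝ^{2n×2n} satisfying H x_k = x_{k+1} for all k = 1, …, n-1. -/

import Mathlib

open Matrix

noncomputable section

/-- The canonical skew-symmetric matrix `J = [[0, I],[-I, 0]]`. -/
def Jmat (n : ℕ) : Matrix (Fin n ⊕ Fin n) (Fin n ⊕ Fin n) ℝ :=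
  Matrix.fromBlocks 0 1 (-1) 0

/-- A matrix `H` is skew-Hamiltonian if `Jᵀ Hᵀ J = H`. -/
def IsSkewHamiltonian {n : ℕ} (H : Matrix (Fin n ⊕ Fin n) (Fin n ⊕ Fin n) ℝ) : Prop :=
  (Jmat n)ᵀ * Hᵀ * Jmat n = H

/-- `X_L = [x_1 ⋯ x_{n-1}]`. -/
def XL {n : ℕ} (x : Fin n → (Fin n ⊕ Fin n) → ℝ) :
    Matrix (Fin n ⊕ Fin n) (Fin (n - 1)) ℝ :=
  Matrix.of fun i j => x ⟨j.1, lt_of_lt_of_le j.2 (Nat.sub_le n 1)⟩ i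

/-- `X_R = [x_2 ⋯ x_n]`. -/
def XR {n : ℕ} (x : Fin n → (Fin n ⊕ Fin n) → ℝ) :
    Matrix (Fin n ⊕ Fin n) (Fin (n - 1)) ℝ :=
  Matrix.of fun i j => x ⟨j.1 + 1, by have := j.2; omega⟩ i

/-- The Moore–Penrose pseudoinverse `X_L⁺ = (X_Lᵀ X_L)⁻¹ X_Lᵀ` of `X_L`
(for `X_L` with linearly independent columns). -/
def XLpinv {n : ℕ} (x : Fin n → (Fin n ⊕ Fin n) → ℝ) :
    Matrix (Fin (n - 1)) (Fin n ⊕ Fin n) ℝ :=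
  ((XL x)ᵀ * XL x)⁻¹ * (XL x)ᵀ

/-- `Ĥ = X_R X_L⁺ + Jᵀ (X_R X_L⁺)ᵀ J`. -/
def Hhat {n : ℕ} (x : Fin n → (Fin n ⊕ Fin n) → ℝ) :
    Matrix (Fin n ⊕ Fin n) (Fin n ⊕ Fin n) ℝ :=
  XR x * XLpinv x + (Jmat n)ᵀ * (XR x * XLpinv x)ᵀ * Jmat n

/-- `H` realizes the Krylov relations `H x_k = x_{k+1}`, `k = 1, …, n-1`. -/
def KrylovRel {n : ℕ} (H : Matrix (Fin n ⊕ Fin n) (Fin n ⊕ Fin n) ℝ)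
    (x : Fin n → (Fin n ⊕ Fin n) → ℝ) : Prop :=
  ∀ k : Fin (n - 1), H *ᵥ x ⟨k.1, lt_of_lt_of_le k.2 (Nat.sub_le n 1)⟩
    = x ⟨k.1 + 1, by have := k.2; omega⟩

/-- The Frobenius norm of a real matrix. -/
def frobNorm {m m' : Type*} [Fintype m] [Fintype m'] (M : Matrix m m' ℝ) : ℝ :=
  Real.sqrt (∑ i, ∑ j, (M i j) ^ 2)

/-!
Let `P = X_L X_L⁺` be the orthogonal projection onto the span of `x_1, …, x_{n-1}` and
`Q = Jᵀ P J`, again an orthogonal projection since `J` is orthogonal. The Krylov relations give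
`H P = X_R X_L⁺`, and skew-Hamiltonicity (`Hᵀ J = J H`) turns the second summand of `Ĥ` into
`Q H`, so `Ĥ = H P + Q H`. The Lagrangian condition says `Q H P = 0`, hence
`H = Ĥ + (1 - Q) H (1 - P)` and the two summands are orthogonal for the trace inner product;
Pythagoras gives `‖Ĥ‖_F ≤ ‖H‖_F`.
-/

section Frobenius

variable {m k : Type*} [Fintype m] [Fintype k]

lemma trace_transpose_mul_self (M : Matrix m k ℝ) :
    trace (Mᵀ * M) = ∑ i, ∑ j, M i j ^ 2 := by
  simp only [trace, diag, mul_apply, transpose_apply, sq]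
  exact Finset.sum_comm

lemma frobNorm_eq_sqrt_trace (M : Matrix m k ℝ) : frobNorm M = √(trace (Mᵀ * M)) := by
  rw [frobNorm, trace_transpose_mul_self]

lemma frobNorm_le_frobNorm_add {A B : Matrix m k ℝ} (horth : trace (Aᵀ * B) = 0) :
    frobNorm A ≤ frobNorm (A + B) := by
  have hBA : trace (Bᵀ * A) = 0 := by
    rw [← trace_transpose, transpose_mul, transpose_transpose, horth]
  have hB : 0 ≤ trace (Bᵀ * B) := by rw [trace_transpose_mul_self]; positivity
  rw [frobNorm_eq_sqrt_trace, frobNorm_eq_sqrt_trace]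
  apply Real.sqrt_le_sqrt
  simp only [transpose_add, Matrix.add_mul, Matrix.mul_add, trace_add, horth, hBA]
  linarith

end Frobenius

lemma IsStarProjection.transpose_eq {m : Type*} [Fintype m] {P : Matrix m m ℝ}
    (hP : IsStarProjection P) : Pᵀ = P :=
  hP.isSelfAdjoint.star_eq

lemma IsStarProjection.star_mul_mul {R : Type*} [Monoid R] [StarMul R] {p u : R}
    (hp : IsStarProjection p) (hu : u * star u = 1) : IsStarProjection (star u * p * u) where
  isIdempotentElem := by
    rw [IsIdempotentElem]
    calc star u * p * u * (star u * p * u) = star u * (p * (u * star u) * p) * u := by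
          simp only [mul_assoc]
      _ = star u * p * u := by rw [hu, mul_one, hp.isIdempotentElem.eq, mul_assoc]
  isSelfAdjoint := by
    rw [IsSelfAdjoint, star_mul, star_mul, star_star, hp.isSelfAdjoint.star_eq, mul_assoc]

lemma isStarProjection_mul_inv_mul_transpose {m k : Type*} [Fintype m] [Fintype k]
    [DecidableEq k] {A : Matrix m k ℝ} (hA : LinearIndependent ℝ A.col) :
    IsStarProjection (A * ((Aᵀ * A)⁻¹ * Aᵀ)) where
  isIdempotentElem := by
    have hG : IsUnit (Aᵀ * A) :=
      (PosDef.conjTranspose_mul_self A (mulVec_injective_iff.mpr hA)).isUnit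
    rw [IsIdempotentElem]
    calc A * ((Aᵀ * A)⁻¹ * Aᵀ) * (A * ((Aᵀ * A)⁻¹ * Aᵀ))
        = A * (((Aᵀ * A)⁻¹ * (Aᵀ * A)) * ((Aᵀ * A)⁻¹ * Aᵀ)) := by
          simp only [Matrix.mul_assoc]
      _ = A * ((Aᵀ * A)⁻¹ * Aᵀ) := by
        rw [nonsing_inv_mul _ ((isUnit_iff_isUnit_det _).mp hG), Matrix.one_mul]
  isSelfAdjoint := by
    change (A * ((Aᵀ * A)⁻¹ * Aᵀ))ᵀ = _
    rw [transpose_mul, transpose_mul, transpose_nonsing_inv, transpose_mul, transpose_transpose,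
      Matrix.mul_assoc]

lemma Jmat_mul_transpose_self (n : ℕ) : Jmat n * (Jmat n)ᵀ = 1 := by
  simp [Jmat, fromBlocks_transpose, fromBlocks_multiply, ← fromBlocks_one]

lemma IsSkewHamiltonian.transpose_mul_Jmat {n : ℕ}
    {H : Matrix (Fin n ⊕ Fin n) (Fin n ⊕ Fin n) ℝ}
    (hH : IsSkewHamiltonian H) : Hᵀ * Jmat n = Jmat n * H := by
  conv_rhs => rw [← hH]
  rw [← mul_assoc, ← mul_assoc, Jmat_mul_transpose_self, one_mul]

section Krylov

variable {n : ℕ} {x : Fin n → (Fin n ⊕ Fin n) → ℝ}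

lemma linearIndependent_col_XL (hx : LinearIndependent ℝ x) : LinearIndependent ℝ (XL x).col :=
  hx.comp _ (Fin.castLE_injective (Nat.sub_le n 1))

lemma KrylovRel.mul_XL {H : Matrix (Fin n ⊕ Fin n) (Fin n ⊕ Fin n) ℝ} (hK : KrylovRel H x) :
    H * XL x = XR x := by
  ext i j
  simpa [mul_apply, mulVec, dotProduct, XL, XR] using congrFun (hK j) i

lemma XL_transpose_mul_mul_XR {M : Matrix (Fin n ⊕ Fin n) (Fin n ⊕ Fin n) ℝ}
    (hM : ∀ i j, x i ⬝ᵥ (M *ᵥ x j) = 0) : (XL x)ᵀ * (M * XR x) = 0 := by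
  ext a b
  simpa [mul_apply, mulVec, dotProduct, XL, XR, Finset.mul_sum] using hM _ _

end Krylov

lemma frobNorm_mul_add_mul_le {m : Type*} [Fintype m] [DecidableEq m] {P Q : Matrix m m ℝ}
    (hP : IsStarProjection P) (hQ : IsStarProjection Q) {H : Matrix m m ℝ}
    (hQHP : Q * (H * P) = 0) : frobNorm (H * P + Q * H) ≤ frobNorm H := by
  have hH : H = (H * P + Q * H) + (1 - Q) * H * (1 - P) := by
    have : (1 - Q) * H * (1 - P) = H - H * P - Q * H + Q * (H * P) := by noncomm_ring
    rw [this, hQHP]; abel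
  have hortho : trace ((H * P + Q * H)ᵀ * ((1 - Q) * H * (1 - P))) = 0 := by
    have hPR : P * Hᵀ * ((1 - Q) * H * (1 - P)) = P * (Hᵀ * (1 - Q) * H) * (1 - P) := by
      noncomm_ring
    have hQR : Hᵀ * Q * ((1 - Q) * H * (1 - P)) = Hᵀ * (Q * (1 - Q)) * H * (1 - P) := by
      noncomm_ring
    rw [transpose_add, transpose_mul, transpose_mul, hP.transpose_eq, hQ.transpose_eq, add_mul,
      trace_add, hPR, hQR, trace_mul_comm, ← mul_assoc, hP.one_sub_mul_self,
      hQ.mul_one_sub_self]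
    simp
  calc frobNorm (H * P + Q * H) ≤ frobNorm ((H * P + Q * H) + (1 - Q) * H * (1 - P)) :=
        frobNorm_le_frobNorm_add hortho
    _ = frobNorm H := by rw [← hH]

/-- `Ĥ` has minimal Frobenius norm among all skew-Hamiltonian matrices realizing the
Krylov relations `H x_k = x_{k+1}`. -/
theorem Hhat_min_frobenius {n : ℕ} (x : Fin n → (Fin n ⊕ Fin n) → ℝ)
    (hLI : LinearIndependent ℝ x)
    (hLag : ∀ i j : Fin n, x i ⬝ᵥ (Jmat n *ᵥ x j) = 0)
    (H : Matrix (Fin n ⊕ Fin n) (Fin n ⊕ Fin n) ℝ)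
    (hH : IsSkewHamiltonian H) (hK : KrylovRel H x) :
    frobNorm (Hhat x) ≤ frobNorm H := by
  set P := XL x * XLpinv x
  have hP : IsStarProjection P :=
    isStarProjection_mul_inv_mul_transpose (linearIndependent_col_XL hLI)
  have hQ : IsStarProjection ((Jmat n)ᵀ * P * Jmat n) :=
    hP.star_mul_mul (Jmat_mul_transpose_self n)
  have hHP : H * P = XR x * XLpinv x := by rw [← Matrix.mul_assoc, hK.mul_XL]
  have hPJXR : P * (Jmat n * XR x) = 0 := by
    simp only [P, XLpinv, Matrix.mul_assoc, XL_transpose_mul_mul_XR hLag, Matrix.mul_zero]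
  have hQHP : (Jmat n)ᵀ * P * Jmat n * (H * P) = 0 := by
    rw [hHP, Matrix.mul_assoc, Matrix.mul_assoc, ← Matrix.mul_assoc (Jmat n),
      ← Matrix.mul_assoc P, hPJXR, Matrix.zero_mul, Matrix.mul_zero]
  have hHhat : Hhat x = H * P + (Jmat n)ᵀ * P * Jmat n * H := by
    rw [Hhat, ← hHP, transpose_mul, hP.transpose_eq]
    simp only [Matrix.mul_assoc, hH.transpose_mul_Jmat]
  rw [hHhat]
  exact frobNorm_mul_add_mul_le hP hQ hQHP
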